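/- arXiv:1608.01016 — 2 statements merged into one kernel-verified Lean document; each statement's English description precedes it below -/
import Mathlib

section
/- Let (X_t) be the conditioned walk on the positive integers started at y, where 1 < x < y are integers. Then P̂_y[τ_x < ∞] = x/y. -/
open MeasureTheory ProbabilityTheory Finset Filter Topology
open scoped ENNReal

/-- One step transition probability of the simple random walk on the positive
integers conditioned to never hit the origin:
`P(x, x+1) = (x+1)/(2x)` and `P(x, x-1) = (x-1)/(2x)`. -/
noncomputable def condStep (u v : ℤ) : ℝ≥0∞ :=
  ENNReal.ofReal
    (if v = u + 1 then ((u : ℝ) + 1) / (2 * u)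
      else if v = u - 1 then ((u : ℝ) - 1) / (2 * u) else 0)

/-- `Pr` is the law of the conditioned walk `X` (the walk on the positive
integers with transition probabilities `condStep`) started at `x`. -/
def IsCondWalk {Ω : Type*} [MeasurableSpace Ω] (Pr : Measure Ω) (X : ℕ → Ω → ℤ)
    (x : ℤ) : Prop :=
  IsProbabilityMeasure Pr ∧ (∀ t, Measurable (X t)) ∧
    ∀ (t : ℕ) (γ : ℕ → ℤ), γ 0 = x →
      Pr {ω | ∀ s ≤ t, X s ω = γ s} = ∏ s ∈ Finset.range t, condStep (γ s) (γ (s + 1))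



noncomputable def wt (t : ℕ) (p : Fin (t+1) → ℤ) : ℝ≥0∞ :=
  ∏ i : Fin t, condStep (p i.castSucc) (p i.succ)

def ok (x : ℤ) (t : ℕ) (u : ℤ) (p : Fin (t+1) → ℤ) : Prop :=
  p 0 = u ∧ p (Fin.last t) = x ∧ ∀ s, s ≠ Fin.last t → p s ≠ x

instance (x : ℤ) (t : ℕ) (u : ℤ) (p : Fin (t+1) → ℤ) : Decidable (ok x t u p) := by
  unfold ok; infer_instance

noncomputable def S (x : ℤ) (t : ℕ) (u : ℤ) : ℝ≥0∞ :=
  ∑' p : Fin (t+1) → ℤ, if ok x t u p then wt t p else 0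

lemma condStep_up (u : ℤ) : condStep u (u+1) = ENNReal.ofReal (((u : ℝ) + 1) / (2 * u)) := by
  simp [condStep]

lemma condStep_down (u : ℤ) : condStep u (u-1) = ENNReal.ofReal (((u : ℝ) - 1) / (2 * u)) := by
  have : u - 1 ≠ u + 1 := by omega
  simp [condStep, this]

lemma condStep_zero {u v : ℤ} (h1 : v ≠ u + 1) (h2 : v ≠ u - 1) : condStep u v = 0 := by
  simp [condStep, h1, h2]

lemma S_zero (x u : ℤ) : S x 0 u = if u = x then 1 else 0 := by
  rw [S]
  have hsing : ∀ s : Fin (0+1), s = 0 := by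
    intro s; ext; omega
  rw [tsum_eq_single (fun _ => u) ?_]
  · by_cases hux : u = x
    · have hok : ok x 0 u (fun _ => u) := ⟨rfl, hux, fun s hs => absurd ((hsing s).trans (hsing (Fin.last 0)).symm) hs⟩
      rw [if_pos hok, if_pos hux]
      simp [wt]
    · have hok : ¬ ok x 0 u (fun _ => u) := fun hk => hux hk.2.1
      simp [hok, hux]
  · intro p hp
    have hok : ¬ ok x 0 u p := by
      intro hk
      exact hp (funext fun s => by rw [hsing s]; exact hk.1)
    simp [hok]

lemma S_succ_self (x : ℤ) (t : ℕ) : S x (t+1) x = 0 := by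
  rw [S]
  have : ∀ p : Fin (t+2) → ℤ, (if ok x (t+1) x p then wt (t+1) p else 0) = 0 := by
    intro p
    have : ¬ ok x (t+1) x p := by
      rintro ⟨h1, _, h3⟩
      exact h3 0 (by simp [Fin.ext_iff, Fin.last]) h1
    simp [this]
  simp only [this, tsum_zero]

lemma tsum_condStep (u : ℤ) (g : ℤ → ℝ≥0∞) :
    ∑' v : ℤ, condStep u v * g v
      = condStep u (u+1) * g (u+1) + condStep u (u-1) * g (u-1) := by
  have hne : u + 1 ≠ u - 1 := by omega
  rw [tsum_eq_sum (s := {u+1, u-1}) ?_]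
  · rw [Finset.sum_pair hne]
  · intro v hv
    simp only [Finset.mem_insert, Finset.mem_singleton, not_or] at hv
    rw [condStep_zero hv.1 hv.2, zero_mul]

lemma S_succ (x : ℤ) (t : ℕ) {u : ℤ} (hu : u ≠ x) :
    S x (t+1) u = condStep u (u+1) * S x t (u+1) + condStep u (u-1) * S x t (u-1) := by
  rw [← tsum_condStep]
  have hcomm : ∀ v : ℤ, condStep u v * S x t v
      = ∑' q : Fin (t+1) → ℤ, condStep u v * (if ok x t v q then wt t q else 0) := by
    intro v; rw [S, ENNReal.tsum_mul_left]
  simp_rw [hcomm]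
  rw [ENNReal.tsum_comm]
  have hinner : ∀ q : Fin (t+1) → ℤ,
      (∑' v : ℤ, condStep u v * (if ok x t v q then wt t q else 0))
        = condStep u (q 0) * (if ok x t (q 0) q then wt t q else 0) := by
    intro q
    rw [tsum_eq_single (q 0) ?_]
    intro v hv
    have hnok : ¬ ok x t v q := fun hk => hv hk.1.symm
    simp [hnok]
  simp_rw [hinner, mul_ite, mul_zero]
  -- now transform the LHS
  rw [S, ← (Fin.consEquiv (fun _ : Fin (t+2) => ℤ)).tsum_eq, ENNReal.tsum_prod']
  have hok_cons : ∀ (a : ℤ) (q : Fin (t+1) → ℤ),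
      ok x (t+1) u (Fin.cons a q) ↔ a = u ∧ q (Fin.last t) = x ∧
        ∀ s, s ≠ Fin.last t → q s ≠ x := by
    intro a q
    constructor
    · rintro ⟨h1, h2, h3⟩
      refine ⟨by simpa using h1, ?_, ?_⟩
      · rw [← Fin.succ_last, ] at h2; simpa using h2
      · intro s hs
        have := h3 s.succ (by
          intro hc
          exact hs (Fin.succ_injective _ (hc.trans (Fin.succ_last t).symm)))
        simpa using this
    · rintro ⟨h1, h2, h3⟩
      refine ⟨by simpa using h1, ?_, ?_⟩
      · rw [← Fin.succ_last]; simpa using h2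
      · intro s
        refine Fin.cases ?_ ?_ s
        · intro _; simpa using h1.trans_ne hu
        · intro i hs
          have hi : i ≠ Fin.last t := by
            intro hc
            apply hs
            rw [hc, Fin.succ_last]
          simpa using h3 i hi
  have hwt_cons : ∀ (a : ℤ) (q : Fin (t+1) → ℤ),
      wt (t+1) (Fin.cons a q) = condStep a (q 0) * wt t q := by
    intro a q
    simp only [wt, Fin.prod_univ_succ, Fin.castSucc_zero, Fin.cons_zero, Fin.cons_succ,
      ← Fin.succ_castSucc]
  have hce : ∀ (a : ℤ) (q : Fin (t+1) → ℤ),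
      (Fin.consEquiv (fun _ : Fin (t+2) => ℤ)) (a, q) = Fin.cons a q := fun _ _ => rfl
  rw [tsum_eq_single u ?_]
  · simp_rw [hce]
    refine tsum_congr fun q => ?_
    by_cases hq : q (Fin.last t) = x ∧ ∀ s, s ≠ Fin.last t → q s ≠ x
    · rw [if_pos ((hok_cons u q).2 ⟨rfl, hq.1, hq.2⟩), if_pos ⟨rfl, hq.1, hq.2⟩, hwt_cons]
    · rw [if_neg, if_neg]
      · exact fun hk => hq ⟨hk.2.1, hk.2.2⟩
      · exact fun hk => hq ⟨((hok_cons u q).1 hk).2.1, ((hok_cons u q).1 hk).2.2⟩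
  · intro a ha
    simp_rw [hce]
    refine ENNReal.tsum_eq_zero.mpr fun q => if_neg fun hk => ha ((hok_cons a q).1 hk).1

noncomputable def H (x : ℤ) : ℕ → ℤ → ℝ
  | 0, u => if u = x then 1 else 0
  | (T+1), u => if u = x then 1 else
      (((u:ℝ)+1)/(2*u)) * H x T (u+1) + (((u:ℝ)-1)/(2*u)) * H x T (u-1)

lemma H_self (x : ℤ) (T : ℕ) : H x T x = 1 := by
  cases T <;> simp [H]

section
variable {x : ℤ} (hx : 1 < x)

include hx in
lemma cast_facts {u : ℤ} (hu : x ≤ u) : (2:ℝ) ≤ (u:ℝ) := by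
  have : (2:ℤ) ≤ u := by omega
  exact_mod_cast this

include hx in
lemma coeff_nonneg {u : ℤ} (hu : x ≤ u) :
    0 ≤ ((u:ℝ)+1)/(2*u) ∧ 0 ≤ ((u:ℝ)-1)/(2*u) := by
  have h2 : (2:ℝ) ≤ (u:ℝ) := cast_facts hx hu
  constructor <;> apply div_nonneg <;> linarith

include hx in
lemma H_nonneg : ∀ T (u : ℤ), x ≤ u → 0 ≤ H x T u := by
  intro T
  induction T with
  | zero => intro u hu; by_cases h : u = x <;> simp [H, h]
  | succ T ih =>
    intro u hu
    by_cases h : u = x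
    · simp [H, h]
    · have hu' : x + 1 ≤ u := by omega
      rw [H, if_neg h]
      obtain ⟨c1, c2⟩ := coeff_nonneg hx hu
      have i1 := ih (u+1) (by omega)
      have i2 := ih (u-1) (by omega)
      positivity

include hx in
lemma H_le : ∀ T (u : ℤ), x ≤ u → H x T u ≤ (x:ℝ)/u := by
  have hx0 : (1:ℝ) < (x:ℝ) := by exact_mod_cast hx
  intro T
  induction T with
  | zero =>
    intro u hu
    by_cases h : u = x
    · subst h; rw [H, if_pos rfl, div_self (by linarith)]
    · have h2 : (2:ℝ) ≤ (u:ℝ) := cast_facts hx hu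
      rw [H, if_neg h]
      positivity
  | succ T ih =>
    intro u hu
    by_cases h : u = x
    · subst h; rw [H, if_pos rfl, div_self (by linarith)]
    · have hu' : x + 1 ≤ u := by omega
      have h2 : (2:ℝ) ≤ (u:ℝ) := cast_facts hx hu
      have h3 : (3:ℝ) ≤ (u:ℝ) := by
        have : (3:ℤ) ≤ u := by omega
        exact_mod_cast this
      rw [H, if_neg h]
      obtain ⟨c1, c2⟩ := coeff_nonneg hx hu
      have i1 := ih (u+1) (by omega)
      have i2 := ih (u-1) (by omega)
      push_cast at i1 i2
      have hne1 : (u:ℝ) ≠ 0 := by linarith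
      have hne2 : (u:ℝ) + 1 ≠ 0 := by linarith
      have hne3 : (u:ℝ) - 1 ≠ 0 := by linarith
      calc ((u:ℝ)+1)/(2*u) * H x T (u+1) + ((u:ℝ)-1)/(2*u) * H x T (u-1)
          ≤ ((u:ℝ)+1)/(2*u) * ((x:ℝ)/((u:ℝ)+1)) + ((u:ℝ)-1)/(2*u) * ((x:ℝ)/((u:ℝ)-1)) :=
            add_le_add (mul_le_mul_of_nonneg_left i1 c1) (mul_le_mul_of_nonneg_left i2 c2)
        _ = (x:ℝ)/u := by field_simp; ring

include hx in
lemma H_mono : ∀ T (u : ℤ), x ≤ u → H x T u ≤ H x (T+1) u := by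
  intro T
  induction T with
  | zero =>
    intro u hu
    by_cases h : u = x
    · simp [H, h]
    · rw [H, if_neg h]
      exact H_nonneg hx 1 u hu
  | succ T ih =>
    intro u hu
    by_cases h : u = x
    · simp [H, h]
    · rw [H, if_neg h]
      conv_rhs => rw [H, if_neg h]
      obtain ⟨c1, c2⟩ := coeff_nonneg hx hu
      have i1 := ih (u+1) (by omega)
      have i2 := ih (u-1) (by omega)
      gcongr

noncomputable def Lf (x u : ℤ) : ℝ := ⨆ T, H x T u

include hx in
lemma H_bdd {u : ℤ} (hu : x ≤ u) : BddAbove (Set.range fun T => H x T u) := by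
  refine ⟨(x:ℝ)/u, ?_⟩
  rintro _ ⟨T, rfl⟩
  exact H_le hx T u hu

include hx in
lemma H_tendsto {u : ℤ} (hu : x ≤ u) :
    Tendsto (fun T => H x T u) atTop (𝓝 (Lf x u)) :=
  tendsto_atTop_ciSup (monotone_nat_of_le_succ fun T => H_mono hx T u hu) (H_bdd hx hu)

include hx in
lemma Lf_nonneg {u : ℤ} (hu : x ≤ u) : 0 ≤ Lf x u :=
  (H_nonneg hx 0 u hu).trans (le_ciSup (H_bdd hx hu) 0)

include hx in
lemma Lf_le {u : ℤ} (hu : x ≤ u) : Lf x u ≤ (x:ℝ)/u :=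
  ciSup_le fun T => H_le hx T u hu

lemma Lf_self (x : ℤ) : Lf x x = 1 := by
  rw [Lf]
  simp only [H_self]
  exact ciSup_const

include hx in
lemma Lf_rec {u : ℤ} (hu : x < u) :
    Lf x u = ((u:ℝ)+1)/(2*u) * Lf x (u+1) + ((u:ℝ)-1)/(2*u) * Lf x (u-1) := by
  have h1 : Tendsto (fun T => H x (T+1) u) atTop (𝓝 (Lf x u)) :=
    (H_tendsto hx hu.le).comp (tendsto_add_atTop_nat 1)
  have h2 : Tendsto (fun T => ((u:ℝ)+1)/(2*u) * H x T (u+1) + ((u:ℝ)-1)/(2*u) * H x T (u-1))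
      atTop (𝓝 (((u:ℝ)+1)/(2*u) * Lf x (u+1) + ((u:ℝ)-1)/(2*u) * Lf x (u-1))) :=
    ((H_tendsto hx (by omega)).const_mul _).add ((H_tendsto hx (by omega)).const_mul _)
  have heq : (fun T => H x (T+1) u) = fun T =>
      ((u:ℝ)+1)/(2*u) * H x T (u+1) + ((u:ℝ)-1)/(2*u) * H x T (u-1) := by
    funext T
    rw [H, if_neg (by omega)]
  rw [heq] at h1
  exact tendsto_nhds_unique h1 h2

include hx in
lemma N_rec {u : ℤ} (hu : x < u) :
    (x:ℝ) - ((u:ℝ)+1) * Lf x (u+1) =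
      2*((x:ℝ) - (u:ℝ) * Lf x u) - ((x:ℝ) - ((u:ℝ)-1) * Lf x (u-1)) := by
  have h2 : (2:ℝ) ≤ (u:ℝ) := cast_facts hx hu.le
  have E := Lf_rec hx hu
  have hu0 : (u:ℝ) ≠ 0 := by linarith
  field_simp at E
  linear_combination E

include hx in
lemma N_key : ∀ n : ℕ,
    (x:ℝ) - ((x:ℝ)+n) * Lf x (x+n) = n * ((x:ℝ) - ((x:ℝ)+1) * Lf x (x+1)) := by
  have key2 : ∀ n : ℕ,
      ((x:ℝ) - ((x:ℝ)+n) * Lf x (x+n) = n * ((x:ℝ) - ((x:ℝ)+1) * Lf x (x+1))) ∧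
      ((x:ℝ) - ((x:ℝ)+(n+1:ℕ)) * Lf x (x+(n+1:ℕ)) = (n+1:ℕ) * ((x:ℝ) - ((x:ℝ)+1) * Lf x (x+1))) := by
    intro n
    induction n with
    | zero =>
      constructor
      · push_cast
        simp [Lf_self]
      · push_cast
        ring
    | succ n ih =>
      refine ⟨ih.2, ?_⟩
      have hrec := N_rec hx (u := x + (n+1:ℕ)) (by omega)
      have e1 : x + ((n+1:ℕ):ℤ) + 1 = x + ((n+1+1:ℕ):ℤ) := by push_cast; ring
      have e2 : x + ((n+1:ℕ):ℤ) - 1 = x + ((n:ℕ):ℤ) := by push_cast; ring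
      rw [e1, e2] at hrec
      have i1 := ih.1
      have i2 := ih.2
      push_cast at hrec i1 i2 ⊢
      linear_combination hrec + 2*i2 - i1
  exact fun n => (key2 n).1

include hx in
lemma Lf_eq {y : ℤ} (hy : x < y) : Lf x y = (x:ℝ)/y := by
  have hx0 : (0:ℝ) < (x:ℝ) := by
    have : (0:ℤ) < x := by omega
    exact_mod_cast this
  set A := (x:ℝ) - ((x:ℝ)+1) * Lf x (x+1) with hA
  have hAnonneg : 0 ≤ A := by
    have h1 : Lf x (x+1) ≤ (x:ℝ)/((x+1:ℤ):ℝ) := Lf_le hx (by omega)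
    push_cast at h1
    have h2 : (0:ℝ) < (x:ℝ) + 1 := by linarith
    have h3 := mul_le_mul_of_nonneg_left h1 h2.le
    rw [mul_div_cancel₀ _ (ne_of_gt h2)] at h3
    rw [hA]
    linarith
  have hAle : ∀ n : ℕ, (n:ℝ) * A ≤ (x:ℝ) := by
    intro n
    have hk := N_key hx n
    have hnn : 0 ≤ ((x:ℝ)+(n:ℝ)) * Lf x (x+(n:ℕ)) := by
      apply mul_nonneg (by linarith [Nat.cast_nonneg (α := ℝ) n])
      exact Lf_nonneg hx (by omega)
    rw [← hk]
    linarith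
  have hA0 : A = 0 := by
    rcases eq_or_lt_of_le hAnonneg with h | h
    · exact h.symm
    · exfalso
      obtain ⟨n, hn⟩ := exists_nat_gt ((x:ℝ)/A)
      have := hAle n
      rw [div_lt_iff₀ h] at hn
      linarith
  have hyx : x + ((y - x).toNat : ℤ) = y := by
    rw [Int.toNat_of_nonneg (by omega)]
    ring
  have hk := N_key hx (y - x).toNat
  rw [hyx] at hk
  rw [← hA, hA0, mul_zero] at hk
  have hy0 : (y:ℝ) ≠ 0 := by
    have : (0:ℤ) < y := by omega
    have : (0:ℝ) < (y:ℝ) := by exact_mod_cast this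
    linarith
  have hcast : ((y - x).toNat : ℝ) = (y:ℝ) - (x:ℝ) := by
    have : (((y - x).toNat : ℤ) : ℝ) = ((y - x : ℤ) : ℝ) := by
      rw [Int.toNat_of_nonneg (by omega)]
    push_cast at this
    linarith [this]
  rw [hcast] at hk
  rw [eq_div_iff hy0]
  nlinarith [hk]
end

section SumS
variable {x : ℤ} (hx : 1 < x)

include hx in
lemma sum_S_eq : ∀ (T : ℕ) (u : ℤ), x ≤ u →
    (∑ t ∈ Finset.range (T+1), S x t u) = ENNReal.ofReal (H x T u) := by
  intro T
  induction T with
  | zero =>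
    intro u hu
    rw [Finset.sum_range_one, S_zero, H]
    rcases eq_or_ne u x with h | h
    · rw [if_pos h, if_pos h, ENNReal.ofReal_one]
    · rw [if_neg h, if_neg h, ENNReal.ofReal_zero]
  | succ T ih =>
    intro u hu
    rw [Finset.sum_range_succ']
    by_cases h : u = x
    · rw [h]
      have hz : ∀ t ∈ Finset.range (T+1), S x (t+1) x = 0 := fun t _ => S_succ_self x t
      rw [Finset.sum_congr rfl hz, Finset.sum_const_zero, zero_add, S_zero, if_pos rfl,
        H_self, ENNReal.ofReal_one]
    · have hu1 : x ≤ u + 1 := by omega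
      have hu2 : x ≤ u - 1 := by omega
      obtain ⟨c1, c2⟩ := coeff_nonneg hx hu
      have hn1 := H_nonneg hx T (u+1) hu1
      have hn2 := H_nonneg hx T (u-1) hu2
      simp only [S_succ x _ h]
      rw [Finset.sum_add_distrib, ← Finset.mul_sum, ← Finset.mul_sum,
        S_zero, if_neg h, add_zero, ih _ hu1, ih _ hu2, condStep_up, condStep_down]
      conv_rhs => rw [H, if_neg h]
      rw [← ENNReal.ofReal_mul c1, ← ENNReal.ofReal_mul c2,
        ← ENNReal.ofReal_add (mul_nonneg c1 hn1) (mul_nonneg c2 hn2)]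

include hx in
lemma tsum_S_eq {y : ℤ} (hy : x < y) :
    ∑' t : ℕ, S x t y = ENNReal.ofReal ((x:ℝ) / (y:ℝ)) := by
  rw [ENNReal.tsum_eq_iSup_nat' (tendsto_add_atTop_nat 1)]
  have heq : ∀ i : ℕ, ∑ a ∈ Finset.range (i+1), S x a y = ENNReal.ofReal (H x i y) :=
    fun i => sum_S_eq hx i y hy.le
  simp_rw [heq]
  have hmono : Monotone fun T => ENNReal.ofReal (H x T y) :=
    monotone_nat_of_le_succ fun T => ENNReal.ofReal_le_ofReal (H_mono hx T y hy.le)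
  have h1 := tendsto_atTop_iSup hmono
  have h2 : Tendsto (fun T => ENNReal.ofReal (H x T y)) atTop
      (𝓝 (ENNReal.ofReal (Lf x y))) :=
    (ENNReal.continuous_ofReal.tendsto _).comp (H_tendsto hx hy.le)
  rw [tendsto_nhds_unique h1 h2, Lf_eq hx hy]
end SumS

/-- extension of a finite path to `ℕ` -/
def pext (t : ℕ) (p : Fin (t+1) → ℤ) : ℕ → ℤ := fun s => if h : s < t+1 then p ⟨s, h⟩ else 0

lemma pext_lt (t : ℕ) (p : Fin (t+1) → ℤ) {s : ℕ} (hs : s < t+1) :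
    pext t p s = p ⟨s, hs⟩ := dif_pos hs

/-- for the conditioned walk started at `y` with `1 < x < y`,
`P̂_y[τ_x < ∞] = x / y`. -/
theorem cond_walk_hits_x
    {Ω : Type*} [MeasurableSpace Ω] (Pr : Measure Ω) (X : ℕ → Ω → ℤ)
    (x y : ℤ) (hx : 1 < x) (hxy : x < y)
    (h : IsCondWalk Pr X y) :
    Pr {ω | ∃ t : ℕ, X t ω = x} = ENNReal.ofReal ((x : ℝ) / (y : ℝ)) := by
  obtain ⟨hprob, hmeas, hcyl⟩ := h
  set Cyl : (Σ t : ℕ, {p : Fin (t+1) → ℤ // ok x t y p}) → Set Ω :=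
    fun i => {ω | ∀ s ≤ i.1, X s ω = pext i.1 i.2.1 s} with hCyl
  -- measurability
  have hCylMeas : ∀ i, MeasurableSet (Cyl i) := by
    rintro ⟨t, p, hp⟩
    have : Cyl ⟨t, p, hp⟩ = ⋂ (s : ℕ) (_ : s ≤ t), (X s) ⁻¹' {pext t p s} := by
      ext ω; simp [hCyl, Set.mem_iInter]
    rw [this]
    exact MeasurableSet.iInter fun s => MeasurableSet.iInter fun _ =>
      hmeas s (measurableSet_singleton _)
  -- measure of cylinders
  have hCylPr : ∀ i, Pr (Cyl i) = wt i.1 i.2.1 := by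
    rintro ⟨t, p, hp⟩
    have h0 : pext t p 0 = y := by
      rw [pext_lt t p (Nat.succ_pos t)]
      exact hp.1
    have hpr := hcyl t (pext t p) h0
    rw [hCyl]
    show Pr {ω | ∀ s ≤ t, X s ω = pext t p s} = wt t p
    rw [hpr, wt, ← Fin.prod_univ_eq_prod_range]
    refine Finset.prod_congr rfl fun i _ => ?_
    have e1 : pext t p i.1 = p i.castSucc := by
      rw [pext_lt t p (by omega : (i:ℕ) < t+1)]
      exact congrArg p (Fin.ext rfl)
    have e2 : pext t p (i.1+1) = p i.succ := by
      rw [pext_lt t p (by omega : (i:ℕ)+1 < t+1)]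
      exact congrArg p (Fin.ext rfl)
    rw [e1, e2]
  -- disjointness
  have hdisj : Pairwise (Function.onFun Disjoint Cyl) := by
    rintro ⟨t1, p1, hp1⟩ ⟨t2, p2, hp2⟩ hne
    rw [Function.onFun, Set.disjoint_left]
    intro ω hw1 hw2
    simp only [hCyl, Set.mem_setOf_eq] at hw1 hw2
    rcases lt_trichotomy t1 t2 with hlt | heq | hlt
    · have e1 : X t1 ω = x := by
        have h3 := hw1 t1 le_rfl
        rw [pext_lt t1 p1 (Nat.lt_succ_self t1)] at h3
        exact h3.trans hp1.2.1
      have e2 : X t1 ω ≠ x := by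
        have h3 := hw2 t1 (by omega)
        rw [pext_lt t2 p2 (by omega)] at h3
        rw [h3]
        exact hp2.2.2 ⟨t1, by omega⟩ (by
          simp only [ne_eq, Fin.ext_iff, Fin.val_last]
          omega)
      exact e2 e1
    · subst heq
      have hpe : p1 = p2 := by
        funext s
        have h1 := hw1 s.1 (by omega)
        have h2 := hw2 s.1 (by omega)
        rw [pext_lt t1 p1 s.isLt, Fin.eta] at h1
        rw [pext_lt t1 p2 s.isLt, Fin.eta] at h2
        rw [← h1, ← h2]
      subst hpe
      exact hne rfl
    · have e1 : X t2 ω = x := by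
        have h3 := hw2 t2 le_rfl
        rw [pext_lt t2 p2 (Nat.lt_succ_self t2)] at h3
        exact h3.trans hp2.2.1
      have e2 : X t2 ω ≠ x := by
        have h3 := hw1 t2 (by omega)
        rw [pext_lt t1 p1 (by omega)] at h3
        rw [h3]
        exact hp1.2.2 ⟨t2, by omega⟩ (by
          simp only [ne_eq, Fin.ext_iff, Fin.val_last]
          omega)
      exact e2 e1
  set U := ⋃ i, Cyl i with hU
  have hUE : U ⊆ {ω | ∃ t, X t ω = x} := by
    rw [hU]
    intro ω hw
    obtain ⟨i, hi⟩ := Set.mem_iUnion.1 hw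
    obtain ⟨t, p, hp⟩ := i
    refine ⟨t, ?_⟩
    have h3 := hi t le_rfl
    rw [pext_lt t p (Nat.lt_succ_self t)] at h3
    exact h3.trans hp.2.1
  have hN : Pr ((X 0) ⁻¹' {y})ᶜ = 0 := by
    have h1 := hcyl 0 (fun _ => y) rfl
    simp only [Finset.range_zero, Finset.prod_empty] at h1
    have h2 : {ω | ∀ s ≤ 0, X s ω = (fun _ => y) s} = (X 0) ⁻¹' {y} := by
      ext ω
      simp only [Set.mem_setOf_eq, Set.mem_preimage, Set.mem_singleton_iff]
      exact ⟨fun h => h 0 le_rfl, fun h s hs => by rw [Nat.le_zero.1 hs]; exact h⟩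
    rw [h2] at h1
    rw [measure_compl (hmeas 0 (measurableSet_singleton _)) (measure_ne_top _ _),
      measure_univ, h1, tsub_self]
  have hEU : {ω | ∃ t, X t ω = x} ⊆ U ∪ ((X 0) ⁻¹' {y})ᶜ := by
    intro ω hw
    by_cases h0 : X 0 ω = y
    · left
      obtain ⟨t, ht⟩ := hw
      have hex : ∃ t, X t ω = x := ⟨t, ht⟩
      refine Set.mem_iUnion.2 ⟨⟨Nat.find hex, ⟨fun s => X s.1 ω, h0, Nat.find_spec hex, ?_⟩⟩, ?_⟩
      · intro s hs
        have hne : s.1 ≠ Nat.find hex := fun hc => hs (Fin.ext hc)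
        have hslt : s.1 < Nat.find hex := by
          have := s.isLt
          omega
        exact Nat.find_min hex hslt
      · intro s hs
        rw [pext_lt _ _ (by omega)]
    · right
      exact h0
  have hUPr : Pr U = ∑' i, Pr (Cyl i) := measure_iUnion hdisj hCylMeas
  have hEPr : Pr {ω | ∃ t : ℕ, X t ω = x} = Pr U := by
    refine le_antisymm ?_ (measure_mono hUE)
    calc Pr {ω | ∃ t : ℕ, X t ω = x} ≤ Pr (U ∪ ((X 0)⁻¹' {y})ᶜ) := measure_mono hEU
    _ ≤ Pr U + Pr (((X 0)⁻¹' {y})ᶜ) := measure_union_le _ _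
    _ = Pr U := by rw [hN, add_zero]
  rw [hEPr, hUPr]
  simp_rw [hCylPr]
  rw [ENNReal.tsum_sigma']
  have hsub : ∀ t : ℕ, (∑' p : {p : Fin (t+1) → ℤ // ok x t y p}, wt t p.1) = S x t y := by
    intro t
    calc (∑' p : {p : Fin (t+1) → ℤ // ok x t y p}, wt t p.1)
        = ∑' p : {p : Fin (t+1) → ℤ | ok x t y p}, wt t p.1 := rfl
      _ = ∑' p : Fin (t+1) → ℤ, Set.indicator {p | ok x t y p} (wt t) p :=
          tsum_subtype _ _
      _ = S x t y := by
          rw [S]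
          exact tsum_congr fun p => by simp [Set.indicator_apply, Set.mem_setOf_eq]
  simp_rw [hsub]
  exact tsum_S_eq hx hxy
end

section
/- Let (X_t) be the conditioned walk on the positive integers started at x ≥ 1. Then the probability of never returning to the starting point is P̂_x[τ̄_x = ∞] = 1/(2x). In particular the conditioned walk is transient. -/
open MeasureTheory ProbabilityTheory Finset
open scoped ENNReal

/-!
The conditioned walk is Doob's `h`-transform, with `h(a) = a`, of the simple random walk `S`
killed on leaving `[1, ∞)`: a path `a = s_0, s_1, …, s_n` in `[1, ∞)` has probability
`s_n / (a 2^n)`. Splitting at the first step, `P̂_x[no return to x by time n + 1]` equals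
`(1 + x q_n(1) + D_n) / (2x)`, where `q_n(a)` is the probability that `S` started at `a` survives
`n` steps and `0 ≤ D_n ≤ (x - 1) q_n(x - 1)` comes from the paths that first step down.
Recurrence of `S` gives `q_n → 0`: the limit `lim q_n` is a bounded harmonic function of the
killed walk, hence linear, hence zero. So the escape probability is `1 / (2x)`.
For transience, `2 min(a, x)` is the Green's function of the killed walk, so the expected number of
visits of the conditioned walk to `x` is at most `2x`, and Borel–Cantelli applies.
-/
noncomputable section

open Set Filter Topology

def srwStep (P : Set ℤ) : Module.End ℝ (ℤ → ℝ) where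
  toFun g a := (P.indicator g (a + 1) + P.indicator g (a - 1)) / 2
  map_add' g g' := by ext a; simp only [indicator_add', Pi.add_apply]; ring
  map_smul' c g := by
    ext a
    simp only [Pi.smul_apply, smul_eq_mul, RingHom.id_apply]
    rw [show c • g = (c • g ·) from rfl, indicator_const_smul_apply, indicator_const_smul_apply,
      smul_eq_mul, smul_eq_mul]
    ring

/-- `srwExpect P n f a = E_a[f(S_n); S_1, …, S_n ∈ P]` for the simple random walk `S` on `ℤ`. -/
def srwExpect (P : Set ℤ) (n : ℕ) : Module.End ℝ (ℤ → ℝ) := srwStep P ^ n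

theorem srwStep_apply (P : Set ℤ) (g : ℤ → ℝ) (a : ℤ) :
    srwStep P g a = (P.indicator g (a + 1) + P.indicator g (a - 1)) / 2 := rfl

@[simp] theorem srwExpect_zero (P : Set ℤ) (f : ℤ → ℝ) : srwExpect P 0 f = f := rfl

theorem srwExpect_succ (P : Set ℤ) (n : ℕ) (f : ℤ → ℝ) :
    srwExpect P (n + 1) f = srwStep P (srwExpect P n f) := by
  rw [srwExpect, pow_succ', Module.End.mul_apply]; rfl

theorem srwExpect_succ' (P : Set ℤ) (n : ℕ) (f : ℤ → ℝ) :
    srwExpect P (n + 1) f = srwExpect P n (srwStep P f) := by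
  rw [srwExpect, pow_succ, Module.End.mul_apply]; rfl

theorem srwExpect_add_const (P : Set ℤ) (n : ℕ) (g : ℤ → ℝ) (c : ℝ) (a : ℤ) :
    srwExpect P n (fun b => g b + c) a = srwExpect P n g a + c * srwExpect P n 1 a := by
  have : (fun b => g b + c) = g + c • (1 : ℤ → ℝ) := by ext; simp
  rw [this, map_add, map_smul]; rfl

theorem srwExpect_const (P : Set ℤ) (n : ℕ) (c : ℝ) (a : ℤ) :
    srwExpect P n (fun _ => c) a = c * srwExpect P n 1 a := by
  simpa using srwExpect_add_const P n 0 c a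

theorem srwExpect_comp_add (P : Set ℤ) (n : ℕ) (g : ℤ → ℝ) (c a : ℤ) :
    srwExpect ((· + c) ⁻¹' P) n (g ∘ (· + c)) a = srwExpect P n g (a + c) := by
  induction n generalizing a with
  | zero => rfl
  | succ n ih =>
    have hfun : srwExpect ((· + c) ⁻¹' P) n (g ∘ (· + c)) = srwExpect P n g ∘ (· + c) :=
      funext ih
    rw [srwExpect_succ, srwExpect_succ, srwStep_apply, srwStep_apply, hfun,
      indicator_comp_right, indicator_comp_right]
    simp only [add_right_comm, sub_add_eq_add_sub]

theorem srwStep_one_le (P : Set ℤ) (a : ℤ) : srwStep P 1 a ≤ 1 := by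
  have h : ∀ c, P.indicator (1 : ℤ → ℝ) c ≤ 1 := fun c =>
    indicator_le_self' (fun _ _ => zero_le_one) c
  rw [srwStep_apply]
  linarith [h (a + 1), h (a - 1)]

section Comparison

variable {P Q : Set ℤ} {f g : ℤ → ℝ}

theorem srwStep_mono (h : ∀ b ∈ P, f b ≤ g b) (a : ℤ) : srwStep P f a ≤ srwStep P g a := by
  have key : ∀ c, P.indicator f c ≤ P.indicator g c := fun c => by
    by_cases hc : c ∈ P
    · simpa [hc] using h c hc
    · simp [hc]
  simp only [srwStep_apply]
  linarith [key (a + 1), key (a - 1)]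

theorem srwStep_congr (h : ∀ b ∈ P, f b = g b) (a : ℤ) : srwStep P f a = srwStep P g a :=
  (srwStep_mono (fun b hb => (h b hb).le) a).antisymm (srwStep_mono (fun b hb => (h b hb).ge) a)

theorem srwExpect_mono (h : ∀ b ∈ P, f b ≤ g b) (n : ℕ) :
    ∀ a, f a ≤ g a → srwExpect P n f a ≤ srwExpect P n g a := by
  induction n with
  | zero => exact fun a ha => ha
  | succ n ih =>
    intro a _
    rw [srwExpect_succ, srwExpect_succ]
    exact srwStep_mono (fun b hb => ih b (h b hb)) a

theorem srwExpect_nonneg {a : ℤ} (h : ∀ b ∈ P, 0 ≤ g b) (ha : 0 ≤ g a) (n : ℕ) :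
    0 ≤ srwExpect P n g a := by
  simpa using srwExpect_mono (f := 0) h n a ha

theorem srwExpect_mono_set (hPQ : P ⊆ Q) (hg : ∀ b ∈ Q, 0 ≤ g b) (n : ℕ) (a : ℤ) :
    srwExpect P n g a ≤ srwExpect Q n g a := by
  induction n generalizing a with
  | zero => rfl
  | succ n ih =>
    rw [srwExpect_succ, srwExpect_succ, srwStep_apply, srwStep_apply]
    have key : ∀ c, P.indicator (srwExpect P n g) c ≤ Q.indicator (srwExpect Q n g) c := by
      intro c
      by_cases hc : c ∈ P
      · simpa [hc, hPQ hc] using ih c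
      · rw [indicator_of_notMem hc]
        exact indicator_nonneg (fun b hb => srwExpect_nonneg hg (hg b hb) n) c
    linarith [key (a + 1), key (a - 1)]

theorem srwExpect_inter_of_closed {S : Set ℤ}
    (hS : ∀ b ∈ S, (b + 1 ∈ P → b + 1 ∈ S) ∧ (b - 1 ∈ P → b - 1 ∈ S)) (n : ℕ) :
    ∀ a ∈ S, srwExpect P n g a = srwExpect (P ∩ S) n g a := by
  induction n with
  | zero => exact fun _ _ => rfl
  | succ n ih =>
    intro a ha
    have key : ∀ c, (c ∈ P → c ∈ S) →
        P.indicator (srwExpect P n g) c = (P ∩ S).indicator (srwExpect (P ∩ S) n g) c := by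
      intro c hc
      by_cases hcP : c ∈ P
      · simp [hcP, hc hcP, ih c (hc hcP)]
      · simp [hcP]
    rw [srwExpect_succ, srwExpect_succ, srwStep_apply, srwStep_apply,
      key _ (hS a ha).1, key _ (hS a ha).2]

theorem srwExpect_eq_of_harmonic (hg : ∀ b ∈ P, srwStep P g b = g b) (n : ℕ) :
    ∀ a ∈ P, srwExpect P n g a = g a := by
  induction n with
  | zero => exact fun _ _ => rfl
  | succ n ih =>
    intro a ha
    rw [srwExpect_succ, srwStep_congr ih, hg a ha]

theorem antitone_srwExpect {a : ℤ} (hg : ∀ b ∈ P, srwStep P g b ≤ g b) (ha : a ∈ P) :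
    Antitone (fun n => srwExpect P n g a) :=
  antitone_nat_of_succ_le fun n => by
    rw [srwExpect_succ']
    exact srwExpect_mono hg n a (hg a ha)

theorem sum_srwExpect_le {h : ℤ → ℝ} {a : ℤ} (hh : ∀ b ∈ P, 0 ≤ h b)
    (hfh : ∀ b ∈ P, f b + srwStep P h b ≤ h b) (ha : a ∈ P) (T : ℕ) :
    ∑ t ∈ range T, srwExpect P t f a ≤ h a := by
  suffices key : ∀ T, ∀ a ∈ P, ∑ t ∈ range T, srwExpect P t f a + srwExpect P T h a ≤ h a from
    (le_add_of_nonneg_right (srwExpect_nonneg hh (hh a ha) T)).trans (key T a ha)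
  intro T
  induction T with
  | zero => simp
  | succ T ih =>
    intro a ha
    calc ∑ t ∈ range (T + 1), srwExpect P t f a + srwExpect P (T + 1) h a
        = f a + srwStep P (∑ t ∈ range T, srwExpect P t f + srwExpect P T h) a := by
          simp only [sum_range_succ', srwExpect_succ, map_add, map_sum, Pi.add_apply,
            Finset.sum_apply, srwExpect_zero]
          ring
      _ ≤ f a + srwStep P h a := by
          gcongr
          exact srwStep_mono (fun b hb => by simpa using ih b hb) a
      _ ≤ h a := hfh a ha

end Comparison

theorem Filter.Tendsto.srwStep {ι : Type*} {l : Filter ι} {P : Set ℤ} {F : ι → ℤ → ℝ}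
    {u : ℤ → ℝ} (hF : ∀ b ∈ P, Tendsto (F · b) l (𝓝 (u b))) (a : ℤ) :
    Tendsto (fun i => srwStep P (F i) a) l (𝓝 (srwStep P u a)) := by
  have hind : ∀ c, Tendsto (fun i => P.indicator (F i) c) l (𝓝 (P.indicator u c)) := by
    intro c
    by_cases hc : c ∈ P
    · simpa [hc] using hF c hc
    · simpa [hc] using tendsto_const_nhds
  simp only [srwStep_apply]
  exact ((hind _).add (hind _)).div_const 2

theorem harmonic_Ici_one_eq_mul {u : ℤ → ℝ}
    (hu : ∀ b ∈ Set.Ici (1 : ℤ), srwStep (Set.Ici 1) u b = u b) (k : ℕ) :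
    u (k + 1) = (k + 1) * u 1 := by
  -- `v` is `u` on `ℕ`, killed at `0`
  set v : ℕ → ℝ := fun k => (Set.Ici (1 : ℤ)).indicator u k
  have hv : ∀ k : ℕ, v (k + 2) = 2 * v (k + 1) - v k := by
    intro k
    have h := hu (k + 1) (by simp)
    rw [srwStep_apply, add_sub_cancel_right, indicator_of_mem (by simp; omega)] at h
    simp only [v, Nat.cast_add, Nat.cast_one, Nat.cast_ofNat, add_assoc, one_add_one_eq_two,
      indicator_of_mem (show (k : ℤ) + 1 ∈ Set.Ici 1 by simp),
      indicator_of_mem (show (k : ℤ) + 2 ∈ Set.Ici 1 by simp; omega)] at h ⊢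
    linarith
  have hlin : ∀ k : ℕ, v k = k * v 1 ∧ v (k + 1) = (k + 1) * v 1 := by
    intro k
    induction k with
    | zero => simp [v]
    | succ k ih => exact ⟨by rw [ih.2]; push_cast; ring, by rw [hv, ih.1, ih.2]; push_cast; ring⟩
  have hvu : ∀ k : ℕ, v (k + 1) = u (k + 1) := fun k => by simp [v]
  simpa [hvu] using (hlin k).2

theorem eq_zero_of_harmonic_Ici_one {u : ℤ → ℝ}
    (hu : ∀ b ∈ Set.Ici (1 : ℤ), srwStep (Set.Ici 1) u b = u b) (h1 : 0 ≤ u 1) {C : ℝ}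
    (hC : ∀ b ∈ Set.Ici (1 : ℤ), u b ≤ C) {a : ℤ} (ha : 1 ≤ a) : u a = 0 := by
  have hu1 : u 1 = 0 := by
    refine le_antisymm (not_lt.1 fun hpos => ?_) h1
    obtain ⟨k, hk⟩ := exists_nat_gt (C / u 1)
    have := hC (k + 1) (by simp)
    rw [harmonic_Ici_one_eq_mul hu, div_lt_iff₀ hpos] at *
    nlinarith
  obtain ⟨k, rfl⟩ : ∃ k : ℕ, a = k + 1 := ⟨(a - 1).toNat, by omega⟩
  rw [harmonic_Ici_one_eq_mul hu, hu1, mul_zero]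

theorem tendsto_srwExpect_one_Ici_one {a : ℤ} (ha : 1 ≤ a) :
    Tendsto (fun n => srwExpect (Set.Ici 1) n 1 a) atTop (𝓝 0) := by
  have hnonneg : ∀ n b, 0 ≤ srwExpect (Set.Ici 1) n 1 b := fun n b =>
    srwExpect_nonneg (fun _ _ => zero_le_one) zero_le_one n
  have hbdd : ∀ b, BddBelow (Set.range fun n => srwExpect (Set.Ici 1) n 1 b) := fun b =>
    ⟨0, by rintro _ ⟨n, rfl⟩; exact hnonneg n b⟩
  set u : ℤ → ℝ := fun b => ⨅ n, srwExpect (Set.Ici 1) n 1 b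
  have hlim : ∀ b ∈ Set.Ici (1 : ℤ),
      Tendsto (fun n => srwExpect (Set.Ici 1) n 1 b) atTop (𝓝 (u b)) := fun b hb =>
    tendsto_atTop_ciInf (antitone_srwExpect (fun c _ => srwStep_one_le _ c) hb) (hbdd b)
  have hharmonic : ∀ b ∈ Set.Ici (1 : ℤ), srwStep (Set.Ici 1) u b = u b := by
    intro b hb
    have hstep := Tendsto.srwStep (F := fun n => srwExpect (Set.Ici 1) n 1) hlim b
    simp only [← srwExpect_succ] at hstep
    exact tendsto_nhds_unique hstep ((hlim b hb).comp (tendsto_add_atTop_nat 1))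
  have hu : u a = 0 := eq_zero_of_harmonic_Ici_one hharmonic (le_ciInf fun n => hnonneg n 1)
    (C := 1) (fun b _ => ciInf_le (hbdd b) 0) ha
  exact hu ▸ hlim a ha

theorem srwExpect_Ici_one_intCast {a : ℤ} (ha : 1 ≤ a) (n : ℕ) :
    srwExpect (Set.Ici 1) n (↑) a = a := by
  refine srwExpect_eq_of_harmonic (fun b hb1 => ?_) n a ha
  rw [Set.mem_Ici] at hb1
  -- at `b = 1` the killed term `(b - 1 : ℝ)` vanishes anyway
  have hkill : (Set.Ici 1).indicator (fun c : ℤ => (c : ℝ)) (b - 1) = ((b - 1 : ℤ) : ℝ) := by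
    by_cases hb : b - 1 ∈ Set.Ici 1
    · exact indicator_of_mem hb _
    · rw [indicator_of_notMem hb, show b - 1 = 0 by simp at hb; omega, Int.cast_zero]
  rw [srwStep_apply, hkill, indicator_of_mem (show b + 1 ∈ Set.Ici 1 by simp; omega)]
  push_cast
  ring

section Avoid

variable {x : ℤ}

theorem srwExpect_avoid_of_gt (hx : 0 ≤ x) {a : ℤ} (hxa : x < a) (n : ℕ) :
    srwExpect ({x}ᶜ ∩ Set.Ici 1) n (↑) a = (a - x) + x * srwExpect (Set.Ici 1) n 1 (a - x) := by
  have hclosed : ∀ b ∈ Set.Ioi x, (b + 1 ∈ {x}ᶜ ∩ Set.Ici 1 → b + 1 ∈ Set.Ioi x) ∧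
      (b - 1 ∈ {x}ᶜ ∩ Set.Ici 1 → b - 1 ∈ Set.Ioi x) := by
    intro b hb
    simp only [Set.mem_Ioi, Set.mem_inter_iff, Set.mem_compl_iff, Set.mem_singleton_iff,
      Set.mem_Ici] at hb ⊢
    omega
  have hset : {x}ᶜ ∩ Set.Ici 1 ∩ Set.Ioi x = Set.Ioi x := by
    ext b; simp only [Set.mem_inter_iff, Set.mem_compl_iff, Set.mem_singleton_iff,
      Set.mem_Ici, Set.mem_Ioi]; omega
  have hshift : (· + x) ⁻¹' Set.Ioi x = Set.Ici (1 : ℤ) := by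
    ext b; simp only [Set.mem_preimage, Set.mem_Ioi, Set.mem_Ici]; omega
  have hcast : ((↑) : ℤ → ℝ) ∘ (· + x) = fun b : ℤ => (b : ℝ) + x := by ext b; simp
  have htrans := srwExpect_comp_add (Set.Ioi x) n (↑) x (a - x)
  rw [hshift, hcast, sub_add_cancel] at htrans
  rw [srwExpect_inter_of_closed hclosed n a hxa, hset, ← htrans, srwExpect_add_const,
    srwExpect_Ici_one_intCast (by omega)]
  push_cast
  ring

theorem srwExpect_avoid_le_of_lt (hx : 1 ≤ x) {a : ℤ} (hxa : a < x) (n : ℕ) :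
    srwExpect ({x}ᶜ ∩ Set.Ici 1) n (↑) a ≤ (x - 1) * srwExpect (Set.Ici 1) n 1 a := by
  have hclosed : ∀ b ∈ Set.Iio x, (b + 1 ∈ {x}ᶜ ∩ Set.Ici 1 → b + 1 ∈ Set.Iio x) ∧
      (b - 1 ∈ {x}ᶜ ∩ Set.Ici 1 → b - 1 ∈ Set.Iio x) := by
    intro b hb
    simp only [Set.mem_Iio, Set.mem_inter_iff, Set.mem_compl_iff, Set.mem_singleton_iff,
      Set.mem_Ici] at hb ⊢
    omega
  have hle : ∀ b : ℤ, b < x → (b : ℝ) ≤ x - 1 := fun b hb => by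
    have : b ≤ x - 1 := by omega
    exact_mod_cast this
  have hx' : (0 : ℝ) ≤ x - 1 := by linarith [show (1 : ℝ) ≤ x by exact_mod_cast hx]
  calc srwExpect ({x}ᶜ ∩ Set.Ici 1) n (↑) a
      = srwExpect ({x}ᶜ ∩ Set.Ici 1 ∩ Set.Iio x) n (↑) a :=
        srwExpect_inter_of_closed hclosed n a hxa
    _ ≤ srwExpect ({x}ᶜ ∩ Set.Ici 1 ∩ Set.Iio x) n (fun _ => (x - 1 : ℝ)) a :=
        srwExpect_mono (fun b hb => hle b hb.2) n a (hle a hxa)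
    _ ≤ srwExpect (Set.Ici 1) n (fun _ => (x - 1 : ℝ)) a :=
        srwExpect_mono_set (fun b hb => hb.1.2) (fun _ _ => hx') n a
    _ = (x - 1) * srwExpect (Set.Ici 1) n 1 a := srwExpect_const _ _ _ _

theorem tendsto_srwExpect_avoid (hx : 1 ≤ x) :
    Tendsto (fun n => srwExpect ({x}ᶜ ∩ Set.Ici 1) n (↑) x) atTop (𝓝 (1 / 2)) := by
  set q : ℕ → ℤ → ℝ := fun n => srwExpect (Set.Ici 1) n 1
  have q_nonneg : ∀ n b, 0 ≤ q n b := fun n b =>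
    srwExpect_nonneg (fun _ _ => zero_le_one) zero_le_one n
  have hxR : (1 : ℝ) ≤ x := by exact_mod_cast hx
  have down : ∀ n, 0 ≤ ({x}ᶜ ∩ Set.Ici 1).indicator (srwExpect ({x}ᶜ ∩ Set.Ici 1) n (↑)) (x - 1)
      ∧ ({x}ᶜ ∩ Set.Ici 1).indicator (srwExpect ({x}ᶜ ∩ Set.Ici 1) n (↑)) (x - 1)
        ≤ (x - 1) * q n (x - 1) := by
    intro n
    by_cases hmem : x - 1 ∈ {x}ᶜ ∩ Set.Ici 1
    · rw [indicator_of_mem hmem]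
      refine ⟨srwExpect_nonneg (fun b hb => ?_) ?_ n, srwExpect_avoid_le_of_lt hx (by omega) n⟩
      · exact_mod_cast (show (0 : ℤ) ≤ b from le_trans zero_le_one hb.2)
      · exact_mod_cast (show (0 : ℤ) ≤ x - 1 from le_trans zero_le_one hmem.2)
    · rw [indicator_of_notMem hmem]
      exact ⟨le_rfl, mul_nonneg (by linarith) (q_nonneg n _)⟩
  have step : ∀ n, srwExpect ({x}ᶜ ∩ Set.Ici 1) (n + 1) (↑) x = (1 + x * q n 1 +
      ({x}ᶜ ∩ Set.Ici 1).indicator (srwExpect ({x}ᶜ ∩ Set.Ici 1) n (↑)) (x - 1)) / 2 := by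
    intro n
    rw [srwExpect_succ, srwStep_apply, indicator_of_mem (by simp; omega),
      srwExpect_avoid_of_gt (by omega) (lt_add_one x)]
    simp [q]
  have upper_tendsto : Tendsto (fun n => (1 + x * q n 1 + (x - 1) * q n (x - 1)) / 2) atTop
      (𝓝 (1 / 2)) := by
    have h1 := (tendsto_srwExpect_one_Ici_one le_rfl).const_mul (x : ℝ)
    have h2 : Tendsto (fun n => ((x : ℝ) - 1) * q n (x - 1)) atTop (𝓝 0) := by
      rcases hx.eq_or_lt with rfl | hx2
      · simp
      · simpa using (tendsto_srwExpect_one_Ici_one (by omega)).const_mul ((x : ℝ) - 1)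
    simpa using (((tendsto_const_nhds (x := (1 : ℝ))).add h1).add h2).div_const 2
  refine (tendsto_add_atTop_iff_nat 1).mp (tendsto_of_tendsto_of_tendsto_of_le_of_le
    tendsto_const_nhds upper_tendsto (fun n => ?_) (fun n => ?_))
  · rw [step]
    nlinarith [(down n).1, q_nonneg n 1]
  · rw [step]
    linarith [(down n).2]

theorem sum_srwExpect_indicator_le (hx : 1 ≤ x) (T : ℕ) :
    ∑ t ∈ range T, srwExpect (Set.Ici 1) t (({x} : Set ℤ).indicator (↑)) x ≤ 2 * x ^ 2 := by
  -- `2 x min(b, x)` is the Green's function of the walk killed at `0`, scaled by `x`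
  set h : ℤ → ℝ := fun b => 2 * x * ((min b x : ℤ) : ℝ)
  have hh : ∀ b ∈ Set.Ici (1 : ℤ), 0 ≤ h b := fun b hb => by
    have : (0 : ℤ) ≤ 2 * x * min b x :=
      mul_nonneg (by omega) (le_min (by simp at hb; omega) (by omega))
    simp only [h]
    exact_mod_cast this
  have hfh : ∀ b ∈ Set.Ici (1 : ℤ),
      ({x} : Set ℤ).indicator (↑) b + srwStep (Set.Ici 1) h b ≤ h b := by
    intro b hb
    rw [Set.mem_Ici] at hb
    have hkill : (Set.Ici 1).indicator h (b - 1) = h (b - 1) := by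
      by_cases hb1 : b - 1 ∈ Set.Ici 1
      · exact indicator_of_mem hb1 _
      · rw [indicator_of_notMem hb1, show b - 1 = 0 by simp at hb1; omega]
        simp [h]
        omega
    rw [srwStep_apply, hkill, indicator_of_mem (show b + 1 ∈ Set.Ici 1 by simp; omega)]
    simp only [h]
    rcases lt_trichotomy b x with hbx | rfl | hbx
    · rw [indicator_of_notMem (by simp; omega), min_eq_left (by omega : b + 1 ≤ x),
        min_eq_left (by omega : b - 1 ≤ x), min_eq_left hbx.le]
      push_cast; linarith
    · rw [indicator_of_mem (Set.mem_singleton b), min_eq_right (by omega : b ≤ b + 1),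
        min_eq_left (by omega : b - 1 ≤ b), min_self]
      push_cast; linarith
    · rw [indicator_of_notMem (by simp; omega), min_eq_right (by omega : x ≤ b + 1),
        min_eq_right (by omega : x ≤ b - 1), min_eq_right hbx.le]
      linarith
  calc _ ≤ h x := sum_srwExpect_le hh hfh (Set.mem_Ici.2 hx) T
    _ = 2 * x ^ 2 := by simp [h]; ring

end Avoid

theorem condStep_of_adj {a c : ℤ} (hc : c = a + 1 ∨ c = a - 1) :
    condStep a c = ENNReal.ofReal (c / (2 * a)) := by
  rcases hc with rfl | rfl
  · simp [condStep]
  · rw [condStep, if_neg (by omega), if_pos rfl]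
    push_cast; rfl

theorem condStep_eq_zero {a c : ℤ} (h₁ : c ≠ a + 1) (h₂ : c ≠ a - 1) : condStep a c = 0 := by
  simp [condStep, h₁, h₂]

/-- `condProb P G n a = P̂_a[X_1, …, X_n ∈ P, X_n ∈ G]`. -/
def condProb (P G : Set ℤ) : ℕ → ℤ → ℝ≥0∞
  | 0, a => G.indicator 1 a
  | n + 1, a => ∑' b, P.indicator (fun b => condStep a b * condProb P G n b) b

theorem condProb_succ (P G : Set ℤ) (n : ℕ) (a : ℤ) :
    condProb P G (n + 1) a =
      P.indicator (fun b => condStep a b * condProb P G n b) (a + 1) +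
        P.indicator (fun b => condStep a b * condProb P G n b) (a - 1) := by
  rw [condProb, tsum_eq_sum (s := {a + 1, a - 1}), sum_pair (by omega)]
  intro b hb
  simp only [Finset.mem_insert, Finset.mem_singleton, not_or] at hb
  simp [condStep_eq_zero hb.1 hb.2]

theorem condProb_inter_Ici_one (P G : Set ℤ) (n : ℕ) :
    ∀ a, 1 ≤ a → condProb P G n a = condProb (P ∩ Set.Ici 1) G n a := by
  induction n with
  | zero => exact fun _ _ => rfl
  | succ n ih =>
    intro a ha
    have key : ∀ c, (c = a + 1 ∨ c = a - 1) →
        P.indicator (fun b => condStep a b * condProb P G n b) c =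
          (P ∩ Set.Ici 1).indicator (fun b => condStep a b * condProb (P ∩ Set.Ici 1) G n b) c := by
      intro c hc
      by_cases hc1 : 1 ≤ c
      · by_cases hcP : c ∈ P
        · simp [hcP, hc1, ih c hc1]
        · simp [hcP]
      · -- the only step out of `Ici 1` is `1 → 0`, which has probability `0`
        have hstep : condStep a c = 0 := by
          rw [condStep_of_adj hc]
          exact ENNReal.ofReal_of_nonpos (div_nonpos_of_nonpos_of_nonneg
            (by exact_mod_cast (show c ≤ 0 by omega)) (by positivity))
        by_cases hcP : c ∈ P <;> simp [hcP, hc1, hstep]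
    rw [condProb_succ, condProb_succ, key _ (Or.inl rfl), key _ (Or.inr rfl)]

theorem condProb_eq_ofReal_srwExpect {P : Set ℤ} (hP : P ⊆ Set.Ici 1) (G : Set ℤ) (n : ℕ) :
    ∀ a, 1 ≤ a → condProb P G n a = ENNReal.ofReal (srwExpect P n (G.indicator (↑)) a / a) := by
  have hG : ∀ b : ℤ, 1 ≤ b → 0 ≤ G.indicator (fun c : ℤ => (c : ℝ)) b := fun b hb => by
    by_cases hbG : b ∈ G
    · simpa [hbG] using (show (0 : ℤ) ≤ b by omega)
    · simp [hbG]
  induction n with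
  | zero =>
    intro a ha
    have ha' : (a : ℝ) ≠ 0 := by exact_mod_cast (show a ≠ 0 by omega)
    by_cases haG : a ∈ G <;> simp [condProb, haG, ha']
  | succ n ih =>
    intro a ha
    have ha' : (0 : ℝ) < a := by exact_mod_cast (show 0 < a by omega)
    have key : ∀ c, (c = a + 1 ∨ c = a - 1) →
        P.indicator (fun b => condStep a b * condProb P G n b) c =
          ENNReal.ofReal (P.indicator (srwExpect P n (G.indicator (↑))) c / (2 * a)) := by
      intro c hc
      by_cases hcP : c ∈ P
      · have hc1 : (1 : ℝ) ≤ c := by exact_mod_cast (hP hcP : 1 ≤ c)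
        rw [indicator_of_mem hcP, indicator_of_mem hcP, condStep_of_adj hc, ih c (hP hcP),
          ← ENNReal.ofReal_mul (by positivity)]
        congr 1
        field_simp
      · simp [hcP]
    have hnonneg : ∀ c, 0 ≤ P.indicator (srwExpect P n (G.indicator (↑))) c / (2 * a) :=
      fun c => div_nonneg (indicator_nonneg (fun b hb =>
        srwExpect_nonneg (fun d hd => hG d (hP hd)) (hG b (hP hb)) n) c) (by positivity)
    rw [condProb_succ, key _ (Or.inl rfl), key _ (Or.inr rfl),
      ← ENNReal.ofReal_add (hnonneg _) (hnonneg _), srwExpect_succ, srwStep_apply]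
    congr 1
    ring

def consPath (a : ℤ) {T : ℕ} (v : Fin T → ℤ) : ℕ → ℤ
  | 0 => a
  | s + 1 => if h : s < T then v ⟨s, h⟩ else 0

theorem consPath_succ (a : ℤ) {T : ℕ} (v : Fin T → ℤ) {s : ℕ} (hs : s < T) :
    consPath a v (s + 1) = v ⟨s, hs⟩ :=
  dif_pos hs

theorem consPath_cons (a b : ℤ) {T : ℕ} (w : Fin T → ℤ) (s : ℕ) :
    consPath a (Fin.cons b w : Fin (T + 1) → ℤ) (s + 1) = consPath b w s := by
  cases s with
  | zero => rfl
  | succ s =>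
    by_cases hs : s < T
    · rw [consPath_succ _ _ (by omega), consPath_succ _ _ hs]
      exact Fin.cons_succ (α := fun _ => ℤ) b w ⟨s, hs⟩
    · simp [consPath, hs]

def pathWeight (γ : ℕ → ℤ) (T : ℕ) : ℝ≥0∞ := ∏ s ∈ range T, condStep (γ s) (γ (s + 1))

theorem pathWeight_cons (a b : ℤ) {T : ℕ} (w : Fin T → ℤ) :
    pathWeight (consPath a (Fin.cons b w : Fin (T + 1) → ℤ)) (T + 1) =
      condStep a b * pathWeight (consPath b w) T := by
  simp only [pathWeight, prod_range_succ', consPath_cons]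
  exact mul_comm _ _

/-- The positions at times `1, …, T` of the paths from `a` that stay in `P` and end in `G`. -/
def pathsIn (P G : Set ℤ) (a : ℤ) (T : ℕ) : Set (Fin T → ℤ) :=
  {v | (∀ i, v i ∈ P) ∧ consPath a v T ∈ G}

theorem cons_mem_pathsIn {P G : Set ℤ} {a b : ℤ} {T : ℕ} {w : Fin T → ℤ} :
    (Fin.cons b w : Fin (T + 1) → ℤ) ∈ pathsIn P G a (T + 1) ↔ b ∈ P ∧ w ∈ pathsIn P G b T := by
  simp only [pathsIn, Set.mem_ofPred_eq, Fin.forall_fin_succ, Fin.cons_zero, Fin.cons_succ,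
    consPath_cons, and_assoc]

theorem tsum_indicator_pathWeight (P G : Set ℤ) (T : ℕ) (a : ℤ) :
    ∑' v, (pathsIn P G a T).indicator (fun v => pathWeight (consPath a v) T) v =
      condProb P G T a := by
  induction T generalizing a with
  | zero =>
    rw [tsum_fintype]
    by_cases ha : a ∈ G <;> simp [pathsIn, condProb, pathWeight, consPath, ha]
  | succ T ih =>
    rw [← (Fin.consEquiv fun _ => ℤ).tsum_eq, condProb]
    refine (ENNReal.tsum_prod (f := fun b w => (pathsIn P G a (T + 1)).indicator
      (fun v => pathWeight (consPath a v) (T + 1)) (Fin.cons b w))).trans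
      (tsum_congr fun b => ?_)
    by_cases hb : b ∈ P
    · have hw : ∀ w, (pathsIn P G a (T + 1)).indicator
          (fun v => pathWeight (consPath a v) (T + 1)) (Fin.cons b w) =
          condStep a b * (pathsIn P G b T).indicator (fun v => pathWeight (consPath b v) T) w := by
        intro w
        by_cases hw : w ∈ pathsIn P G b T
        · rw [indicator_of_mem (cons_mem_pathsIn.2 ⟨hb, hw⟩), indicator_of_mem hw,
            pathWeight_cons]
        · rw [indicator_of_notMem (fun h => hw (cons_mem_pathsIn.1 h).2),
            indicator_of_notMem hw, mul_zero]
      simp only [hw, ENNReal.tsum_mul_left, ih, indicator_of_mem hb]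
    · simp only [indicator_of_notMem hb,
        indicator_of_notMem (fun h => hb (cons_mem_pathsIn.1 h).1), tsum_zero]

section Cylinder

variable {Ω : Type*} (X : ℕ → Ω → ℤ) (x : ℤ) {T : ℕ}

def pathCylinder (v : Fin T → ℤ) : Set Ω := {ω | ∀ s ≤ T, X s ω = consPath x v s}

theorem measurableSet_pathCylinder [MeasurableSpace Ω] (hX : ∀ t, Measurable (X t))
    (v : Fin T → ℤ) : MeasurableSet (pathCylinder X x v) := by
  simp only [pathCylinder, Set.ofPred_forall]
  exact .iInter fun s => .iInter fun _ => hX s (measurableSet_singleton _)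

theorem pairwiseDisjoint_pathCylinder (S : Set (Fin T → ℤ)) :
    S.PairwiseDisjoint (pathCylinder X x) := by
  intro v _ w _ hvw
  obtain ⟨i, hi⟩ := Function.ne_iff.1 hvw
  refine Set.disjoint_left.2 fun ω hv hw => hi ?_
  have := (hv (i + 1) i.isLt).symm.trans (hw (i + 1) i.isLt)
  rwa [consPath_succ _ _ i.isLt, consPath_succ _ _ i.isLt] at this

theorem inter_setOf_eq_biUnion_pathCylinder (P G : Set ℤ) :
    {ω | (∀ s, 1 ≤ s → s ≤ T → X s ω ∈ P) ∧ X T ω ∈ G} ∩ {ω | X 0 ω = x} =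
      ⋃ v ∈ pathsIn P G x T, pathCylinder X x v := by
  ext ω
  simp only [Set.mem_inter_iff, Set.mem_ofPred_eq, Set.mem_iUnion, exists_prop, pathCylinder]
  constructor
  · rintro ⟨⟨hP, hG⟩, h0⟩
    have hpath : ∀ s ≤ T, X s ω = consPath x (fun i : Fin T => X (i + 1) ω) s := by
      rintro (_ | s) hs
      · exact h0
      · rw [consPath_succ _ _ (by omega)]
    refine ⟨_, ⟨fun i => hP _ (by omega) (by omega), ?_⟩, hpath⟩
    rw [← hpath T le_rfl]
    exact hG
  · rintro ⟨v, ⟨hvP, hvG⟩, hv⟩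
    refine ⟨⟨fun s hs1 hsT => ?_, hv T le_rfl ▸ hvG⟩, hv 0 (Nat.zero_le _)⟩
    obtain ⟨s, rfl⟩ := Nat.exists_eq_add_of_le' hs1
    rw [hv _ hsT, consPath_succ _ _ (by omega)]
    exact hvP _

end Cylinder

namespace IsCondWalk

variable {Ω : Type*} [MeasurableSpace Ω] {Pr : Measure Ω} {X : ℕ → Ω → ℤ} {x : ℤ}

theorem measure_eq_condProb (h : IsCondWalk Pr X x) (P G : Set ℤ) (T : ℕ) :
    Pr {ω | (∀ s, 1 ≤ s → s ≤ T → X s ω ∈ P) ∧ X T ω ∈ G} = condProb P G T x := by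
  obtain ⟨hprob, hX, hcyl⟩ := h
  have hstart : Pr {ω | X 0 ω = x}ᶜ = 0 := by
    rw [prob_compl_eq_zero_iff (show MeasurableSet {ω | X 0 ω = x} from
      hX 0 (measurableSet_singleton x))]
    simpa using hcyl 0 (fun _ => x) rfl
  rw [← measure_inter_conull hstart, inter_setOf_eq_biUnion_pathCylinder,
    measure_biUnion (Set.to_countable _) (pairwiseDisjoint_pathCylinder X x _)
      fun v _ => measurableSet_pathCylinder X x hX v,
    tsum_subtype (pathsIn P G x T) (fun v => Pr (pathCylinder X x v)),
    ← tsum_indicator_pathWeight]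
  congr with v
  congr with v
  exact hcyl T (consPath x v) rfl

theorem measure_never_returns (h : IsCondWalk Pr X x) (hx : 1 ≤ x) :
    Pr {ω | ∀ t : ℕ, 1 ≤ t → X t ω ≠ x} = ENNReal.ofReal (1 / (2 * (x : ℝ))) := by
  have := h.1
  set A : ℕ → Set Ω := fun n => {ω | ∀ s, 1 ≤ s → s ≤ n → X s ω ≠ x}
  have hA : ∀ n, Pr (A n) = ENNReal.ofReal (srwExpect ({x}ᶜ ∩ Set.Ici 1) n (↑) x / x) := by
    intro n
    have hset : A n = {ω | (∀ s, 1 ≤ s → s ≤ n → X s ω ∈ ({x}ᶜ : Set ℤ)) ∧ X n ω ∈ Set.univ} := by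
      ext ω; simp [A]
    rw [hset, h.measure_eq_condProb, condProb_inter_Ici_one _ _ _ _ hx,
      condProb_eq_ofReal_srwExpect Set.inter_subset_right _ _ _ hx, indicator_univ]
  have hA_meas : ∀ n, MeasurableSet (A n) := fun n => by
    simp only [A, Set.ofPred_forall]
    exact .iInter fun s => .iInter fun _ => .iInter fun _ =>
      (h.2.1 s (measurableSet_singleton x)).compl
  have hA_anti : Antitone A := fun m n hmn ω hω s hs1 hsn => hω s hs1 (hsn.trans hmn)
  have hlim := tendsto_measure_iInter_atTop (fun n => (hA_meas n).nullMeasurableSet) hA_anti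
    ⟨0, measure_ne_top Pr _⟩
  have hvals : Tendsto (fun n => Pr (A n)) atTop (𝓝 (ENNReal.ofReal (1 / (2 * (x : ℝ))))) := by
    simp only [hA]
    convert ENNReal.tendsto_ofReal ((tendsto_srwExpect_avoid hx).div_const (x : ℝ)) using 3
    ring
  have hinter : ⋂ n, A n = {ω | ∀ t : ℕ, 1 ≤ t → X t ω ≠ x} := by
    ext ω
    simp only [A, Set.mem_iInter, Set.mem_ofPred_eq]
    exact ⟨fun hω t ht => hω t t ht le_rfl, fun hω n s hs _ => hω s hs⟩
  rw [← hinter]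
  exact tendsto_nhds_unique hlim hvals

theorem measure_infinitely_often_eq_zero (h : IsCondWalk Pr X x) (hx : 1 ≤ x) :
    Pr {ω | {t : ℕ | X t ω = x}.Infinite} = 0 := by
  set u : ℕ → ℝ := fun t => srwExpect (Set.Ici 1) t (({x} : Set ℤ).indicator (↑)) x / x
  have hxR : (0 : ℝ) < x := by exact_mod_cast (show 0 < x by omega)
  have hvisit : ∀ t, Pr {ω | X t ω = x} = ENNReal.ofReal (u t) := by
    intro t
    have hset : {ω | X t ω = x} =
        {ω | (∀ s, 1 ≤ s → s ≤ t → X s ω ∈ Set.univ) ∧ X t ω ∈ ({x} : Set ℤ)} := by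
      ext ω; simp
    rw [hset, h.measure_eq_condProb, condProb_inter_Ici_one _ _ _ _ hx, Set.univ_inter,
      condProb_eq_ofReal_srwExpect subset_rfl _ _ _ hx]
  have hf : ∀ b, 0 ≤ ({x} : Set ℤ).indicator (fun c : ℤ => (c : ℝ)) b :=
    indicator_nonneg fun c hc => (Set.mem_singleton_iff.1 hc).symm ▸ hxR.le
  have hu_nonneg : ∀ t, 0 ≤ u t := fun t =>
    div_nonneg (srwExpect_nonneg (fun b _ => hf b) (hf x) t) hxR.le
  have hu_sum : Summable u := summable_of_sum_range_le hu_nonneg fun T => by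
    rw [← sum_div, div_le_iff₀ hxR]
    calc _ ≤ 2 * (x : ℝ) ^ 2 := sum_srwExpect_indicator_le hx T
      _ = 2 * x * x := by ring
  have hfinite : ∑' t, Pr {ω | X t ω = x} ≠ ⊤ := by
    simp only [hvisit, ← ENNReal.ofReal_tsum_of_nonneg hu_nonneg hu_sum]
    exact ENNReal.ofReal_ne_top
  simpa [Nat.frequently_atTop_iff_infinite] using measure_setOfPred_frequently_eq_zero hfinite

end IsCondWalk

end

/-- for the conditioned walk started at `x ≥ 1`, the probability
of never returning to the starting point is `P̂_x[τ̄_x = ∞] = 1/(2x)`.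
In particular, the walk is transient: almost surely it visits `x` only
finitely many times. -/
theorem cond_walk_escape_probability
    {Ω : Type*} [MeasurableSpace Ω] (Pr : Measure Ω) (X : ℕ → Ω → ℤ)
    (x : ℤ) (hx : 1 ≤ x) (h : IsCondWalk Pr X x) :
    Pr {ω | ∀ t : ℕ, 1 ≤ t → X t ω ≠ x} = ENNReal.ofReal (1 / (2 * (x : ℝ)))
      ∧ Pr {ω | {t : ℕ | X t ω = x}.Infinite} = 0 :=
  ⟨h.measure_never_returns hx, h.measure_infinitely_often_eq_zero hx⟩
end
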